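/- arXiv:1508.01980 — 5 statements merged into one kernel-verified Lean document; each statement's English description precedes it below -/
import Mathlib

section
/- Let n ≥ 3, 0 < m < (n-2)/n, α, β real with β < 0 and α = βγ for some γ. Suppose f : (0,∞) → (0,∞) is a C² function. Define g : (0,∞) → ℝ by g(r) = r^{-(n-2)/m} f(1/r). Then f is a radially symmetric solution of Δf^m + αf + βx·∇f = 0 on ℝⁿ\{0} (i.e., (f^m)'' + ((n-1)/r)(f^m)' + αf + βr f' = 0 on (0,∞)) if and only if g satisfies (g^m)'' + ((n-1)/r)(g^m)' + r^{(n-2-nm)/m - 2}(α̃ g + β̃ r g') = 0 on (0,∞), where β̃ = -β and α̃ = α - ((n-2)/m)β. -/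
/-!
Put `u = f ^ m`, `k = (n - 2) / m` and `K_j h(r) = r ^ (-j) h(1 / r)`, so that `g = K_k f` and
`g ^ m = K_{n-2} u`. The Kelvin transform `K_{n-2}` intertwines the radial Laplacian:
`Δ(K_{n-2} u) = K_{n+2}(Δu)`. Since `r ∂_r ∘ K_k = K_k ∘ (-k - s ∂_s)`, the drift
`α̃ g + β̃ r g'` equals `K_k(α f + β s f')`, and the factor `r ^ ((n - 2 - n m) / m - 2)` turns
`K_k` into `K_{n+2}`. So the equation for `g` at `r` is `r ^ (-n - 2)` times the equation for `f`
at `1 / r`.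
-/

open Set Filter Topology

noncomputable section

/-- `kelvin (n - 2)` is the Kelvin transform of radial functions on `ℝⁿ`. -/
def kelvin (k : ℝ) (f : ℝ → ℝ) (r : ℝ) : ℝ := r ^ (-k) * f r⁻¹

def radialLaplacian (n : ℝ) (h : ℝ → ℝ) (r : ℝ) : ℝ :=
  deriv (deriv h) r + ((n - 1) / r) * deriv h r

def driftTerm (α β : ℝ) (h : ℝ → ℝ) (r : ℝ) : ℝ := α * h r + β * r * deriv h r

end

section Kelvin

variable {f : ℝ → ℝ} {r : ℝ}

lemma rpow_mul_kelvin (hr : 0 < r) (a k : ℝ) (f : ℝ → ℝ) :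
    r ^ a * kelvin k f r = kelvin (k - a) f r := by
  rw [kelvin, kelvin, ← mul_assoc, ← Real.rpow_add hr, neg_sub, sub_eq_neg_add, add_comm]

lemma kelvin_rpow (hr : 0 < r) (hf : 0 ≤ f r⁻¹) (k m : ℝ) :
    kelvin k f r ^ m = kelvin (k * m) (fun s => f s ^ m) r := by
  rw [kelvin, kelvin, Real.mul_rpow (Real.rpow_nonneg hr.le _) hf, ← Real.rpow_mul hr.le, neg_mul]

lemma hasDerivAt_kelvin {f' : ℝ → ℝ} (hr : 0 < r) (k : ℝ) (hf : HasDerivAt f (f' r⁻¹) r⁻¹) :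
    HasDerivAt (kelvin k f) (-k * kelvin (k + 1) f r - kelvin (k + 2) f' r) r := by
  refine HasDerivAt.congr_deriv (f := kelvin k f) ((Real.hasDerivAt_rpow_const (p := -k)
    (Or.inl hr.ne')).mul (hf.comp r (hasDerivAt_inv hr.ne'))) ?_
  simp only [kelvin, show -(k + 1) = -k - 1 by ring,
    show -(k + 2) = -k - 1 - 1 by ring, Real.rpow_sub_one hr.ne']
  field_simp
  ring

lemma deriv_kelvin (hf : DifferentiableOn ℝ f (Ioi 0)) (hr : 0 < r) (k : ℝ) :
    deriv (kelvin k f) r = -k * kelvin (k + 1) f r - kelvin (k + 2) (deriv f) r :=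
  (hasDerivAt_kelvin hr k
    (hf.differentiableAt (Ioi_mem_nhds (inv_pos.mpr hr))).hasDerivAt).deriv

lemma driftTerm_kelvin (hf : DifferentiableOn ℝ f (Ioi 0)) (hr : 0 < r) (k α β : ℝ) :
    driftTerm (α - k * β) (-β) (kelvin k f) r = kelvin k (driftTerm α β f) r := by
  rw [driftTerm, deriv_kelvin hf hr]
  simp only [kelvin, driftTerm, show -(k + 1) = -k - 1 by ring,
    show -(k + 2) = -k - 1 - 1 by ring, Real.rpow_sub_one hr.ne']
  field_simp
  ring

lemma radialLaplacian_kelvin (n : ℝ) {u : ℝ → ℝ} (hu : ContDiffOn ℝ 2 u (Ioi 0)) (hr : 0 < r) :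
    radialLaplacian n (kelvin (n - 2) u) r = kelvin (n + 2) (radialLaplacian n u) r := by
  have hu1 : DifferentiableOn ℝ u (Ioi 0) := hu.differentiableOn two_ne_zero
  have hu2 : DifferentiableOn ℝ (deriv u) (Ioi 0) :=
    (hu.deriv_of_isOpen isOpen_Ioi (m := 1) (by norm_num)).differentiableOn one_ne_zero
  have hr' : r⁻¹ ∈ Ioi 0 := inv_pos.mpr hr
  have hD : deriv (kelvin (n - 2) u) =ᶠ[𝓝 r]
      fun s => -(n - 2) * kelvin (n - 1) u s - kelvin n (deriv u) s := by
    filter_upwards [Ioi_mem_nhds hr] with s hs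
    rw [deriv_kelvin hu1 hs, sub_add_cancel, show n - 2 + 1 = n - 1 by ring]
  have hD2 : HasDerivAt (fun s => -(n - 2) * kelvin (n - 1) u s - kelvin n (deriv u) s)
      (-(n - 2) * (-(n - 1) * kelvin (n - 1 + 1) u r - kelvin (n - 1 + 2) (deriv u) r)
        - (-n * kelvin (n + 1) (deriv u) r - kelvin (n + 2) (deriv (deriv u)) r)) r :=
    ((hasDerivAt_kelvin hr (n - 1) (hu1.differentiableAt (Ioi_mem_nhds hr')).hasDerivAt).const_mul
      _).sub (hasDerivAt_kelvin hr n (hu2.differentiableAt (Ioi_mem_nhds hr')).hasDerivAt)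
  rw [radialLaplacian, hD.deriv_eq, hD2.deriv, hD.eq_of_nhds]
  simp only [kelvin, radialLaplacian, show -(n - 1 + 1) = -n by ring,
    show -(n - 1 + 2) = -n - 1 by ring, show -(n + 1) = -n - 1 by ring,
    show -(n + 2) = -n - 1 - 1 by ring, show -(n - 1) = -n + 1 by ring,
    Real.rpow_sub_one hr.ne', Real.rpow_add_one hr.ne']
  field_simp
  ring

end Kelvin

section Congr

variable {h₁ h₂ : ℝ → ℝ} {r : ℝ}

lemma Filter.EventuallyEq.radialLaplacian_eq (h : h₁ =ᶠ[𝓝 r] h₂) (n : ℝ) :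
    radialLaplacian n h₁ r = radialLaplacian n h₂ r := by
  rw [radialLaplacian, radialLaplacian, h.deriv.deriv_eq, h.deriv_eq]

lemma Filter.EventuallyEq.driftTerm_eq (h : h₁ =ᶠ[𝓝 r] h₂) (α β : ℝ) :
    driftTerm α β h₁ r = driftTerm α β h₂ r := by
  rw [driftTerm, driftTerm, h.eq_of_nhds, h.deriv_eq]

end Congr

lemma forall_Ioi_eq_zero_iff_of_eq_kelvin {F G : ℝ → ℝ} (k : ℝ)
    (h : ∀ r ∈ Ioi (0 : ℝ), G r = kelvin k F r) :
    (∀ r ∈ Ioi (0 : ℝ), F r = 0) ↔ (∀ r ∈ Ioi (0 : ℝ), G r = 0) := by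
  have hinv : ∀ r ∈ Ioi (0 : ℝ), r⁻¹ ∈ Ioi (0 : ℝ) := fun _ hr => mem_Ioi.mpr (inv_pos.mpr hr)
  refine ⟨fun hF r hr => by rw [h r hr, kelvin, hF _ (hinv r hr), mul_zero], fun hG r hr => ?_⟩
  have hr' := hinv r hr
  have := h _ hr'
  rw [hG _ hr', kelvin, inv_inv, eq_comm, mul_eq_zero] at this
  exact this.resolve_left (Real.rpow_pos_of_pos hr' _).ne'

theorem stmt_6_general (n : ℕ) (m α β α' β' : ℝ)
    (hm0 : 0 < m)
    (hα' : α' = α - (((n : ℝ) - 2) / m) * β) (hβ' : β' = -β)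
    (f g : ℝ → ℝ) (hfpos : ∀ r ∈ Ioi (0 : ℝ), 0 < f r)
    (hf : ContDiffOn ℝ 2 f (Ioi 0))
    (hg : ∀ r ∈ Ioi (0 : ℝ), g r = r ^ (-(((n : ℝ) - 2) / m)) * f (1 / r)) :
    (∀ r ∈ Ioi (0 : ℝ),
        deriv (deriv (fun s => f s ^ m)) r + (((n : ℝ) - 1) / r) * deriv (fun s => f s ^ m) r
          + α * f r + β * r * deriv f r = 0) ↔
      (∀ r ∈ Ioi (0 : ℝ),
        deriv (deriv (fun s => g s ^ m)) r + (((n : ℝ) - 1) / r) * deriv (fun s => g s ^ m) r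
          + r ^ (((n : ℝ) - 2 - n * m) / m - 2) * (α' * g r + β' * r * deriv g r) = 0) := by
  have hgk : EqOn g (kelvin ((n - 2) / m) f) (Ioi 0) := fun r hr => by rw [hg r hr, kelvin, one_div]
  have hgm : EqOn (fun s => g s ^ m) (kelvin (n - 2) fun s => f s ^ m) (Ioi 0) := fun r hr => by
    show g r ^ m = _
    rw [hgk hr, kelvin_rpow hr (hfpos _ (mem_Ioi.mpr (inv_pos.mpr hr))).le,
      div_mul_cancel₀ _ hm0.ne']
  have hu : ContDiffOn ℝ 2 (fun s => f s ^ m) (Ioi 0) :=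
    hf.rpow_const_of_ne fun s hs => (hfpos s hs).ne'
  have he : ((n : ℝ) - 2 - n * m) / m - 2 = (n - 2) / m - (n + 2) := by
    field_simp; ring
  refine forall_Ioi_eq_zero_iff_of_eq_kelvin (n + 2)
    (F := fun r => radialLaplacian n (fun s => f s ^ m) r + α * f r + β * r * deriv f r)
    fun r hr => ?_
  change radialLaplacian n (fun s => g s ^ m) r + r ^ _ * driftTerm α' β' g r = _
  rw [(hgm.eventuallyEq_of_mem (Ioi_mem_nhds hr)).radialLaplacian_eq,
    (hgk.eventuallyEq_of_mem (Ioi_mem_nhds hr)).driftTerm_eq, hα', hβ',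
    radialLaplacian_kelvin n hu hr, driftTerm_kelvin (hf.differentiableOn two_ne_zero) hr,
    he, rpow_mul_kelvin hr, sub_sub_cancel]
  simp only [kelvin, driftTerm]
  ring

theorem stmt_6 (n : ℕ) (hn : 3 ≤ n) (m α β γ α' β' : ℝ)
    (hm0 : 0 < m) (hm1 : m < ((n : ℝ) - 2) / n)
    (hβ : β < 0) (hαβ : α = β * γ)
    (hα' : α' = α - (((n : ℝ) - 2) / m) * β) (hβ' : β' = -β)
    (f g : ℝ → ℝ) (hfpos : ∀ r ∈ Ioi (0 : ℝ), 0 < f r)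
    (hf : ContDiffOn ℝ 2 f (Ioi 0))
    (hg : ∀ r ∈ Ioi (0 : ℝ), g r = r ^ (-(((n : ℝ) - 2) / m)) * f (1 / r)) :
    (∀ r ∈ Ioi (0 : ℝ),
        deriv (deriv (fun s => f s ^ m)) r + (((n : ℝ) - 1) / r) * deriv (fun s => f s ^ m) r
          + α * f r + β * r * deriv f r = 0) ↔
      (∀ r ∈ Ioi (0 : ℝ),
        deriv (deriv (fun s => g s ^ m)) r + (((n : ℝ) - 1) / r) * deriv (fun s => g s ^ m) r
          + r ^ (((n : ℝ) - 2 - n * m) / m - 2) * (α' * g r + β' * r * deriv g r) = 0) :=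
  stmt_6_general n m α β α' β' hm0 hα' hβ' f g hfpos hf hg
end

section
/- Let n ≥ 3, 0 < m ≤ (n-2)/n, α̃ > 0, β̃ ≠ 0 with α̃/β̃ ≤ (n-2)/m, and R₀ > 0. Let g ∈ C([0,R₀)) ∩ C²((0,R₀)) be a positive solution of (g^m)'' + ((n-1)/r)(g^m)' + r^{(n-2-nm)/m - 2}(α̃ g + β̃ r g') = 0 on (0,R₀) with g(0) = η > 0 and lim_{r→0⁺} r g'(r) = 0. Set k̃ = β̃/α̃. Then g(r) + k̃ r g'(r) > 0 and g'(r) < 0 for all r ∈ (0,R₀). -/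
open Set Filter Topology Real

/-!
Write `w = g ^ m` and `F = α g + β r g'`. The equation reads
`(r ^ (n-1) w')' = -r ^ (n-1) r ^ k F` and `r ^ (n-1) w' → 0` at the origin, so `g' < 0` at
every `r` below which `F > 0`. As `F(0+) = α η > 0`, it remains to see that `F` cannot
vanish first at some `r₁`. For `β ≤ 0` this contradicts `g'(r₁) < 0`. For `β > 0` let
`c = m α / β`: then `u = (r ^ c w)'` is a positive multiple of `F`, and the equation gives
`u' = c (n-2-c) r ^ (c-2) w + A u` with `A` continuous, so `c ≤ n - 2` yields `u' ≥ A u`, and a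
Grönwall argument keeps `u` positive up to `r₁`.
-/

theorem monotoneOn_exp_mul_of_neg_mul_le_deriv {u u' : ℝ → ℝ} {a b C : ℝ}
    (hu : ∀ x ∈ Icc a b, HasDerivAt u (u' x) x) (h : ∀ x ∈ Ioo a b, -C * u x ≤ u' x) :
    MonotoneOn (fun x => exp (C * x) * u x) (Icc a b) := by
  have hd : ∀ x ∈ Icc a b,
      HasDerivAt (fun x => exp (C * x) * u x) (exp (C * x) * (C * u x + u' x)) x := by
    intro x hx
    have hexp : HasDerivAt (fun x => exp (C * x)) (exp (C * x) * C) x :=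
      ((hasDerivAt_id' x).const_mul C).exp.congr_deriv (by ring)
    exact (hexp.fun_mul (hu x hx)).congr_deriv (by ring)
  refine monotoneOn_of_deriv_nonneg (convex_Icc a b)
    (fun x hx => (hd x hx).continuousAt.continuousWithinAt)
    (fun x hx => (hd x (interior_subset hx)).differentiableAt.differentiableWithinAt)
    fun x hx => ?_
  rw [interior_Icc] at hx
  rw [(hd x (Ioo_subset_Icc_self hx)).deriv]
  exact mul_nonneg (exp_pos _).le (by linarith [h x hx])

theorem pos_of_pos_of_mul_le_deriv {u u' A : ℝ → ℝ} {a b : ℝ} (hab : a ≤ b)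
    (hu : ∀ x ∈ Icc a b, HasDerivAt u (u' x) x) (hA : ContinuousOn A (Icc a b))
    (hu₀ : ∀ x ∈ Ioo a b, 0 ≤ u x) (h : ∀ x ∈ Ioo a b, A x * u x ≤ u' x)
    (ha : 0 < u a) :
    0 < u b := by
  obtain ⟨C, hC⟩ := isCompact_Icc.exists_bound_of_continuousOn hA
  have hmono := monotoneOn_exp_mul_of_neg_mul_le_deriv (C := C) hu fun x hx =>
    calc -C * u x ≤ A x * u x := by
          refine mul_le_mul_of_nonneg_right ?_ (hu₀ x hx)
          linarith [neg_abs_le (A x), hC x (Ioo_subset_Icc_self hx), Real.norm_eq_abs (A x)]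
      _ ≤ u' x := h x hx
  have := hmono (left_mem_Icc.2 hab) (right_mem_Icc.2 hab) hab
  exact pos_of_mul_pos_right ((mul_pos (exp_pos _) ha).trans_le this) (exp_pos _).le

theorem neg_of_tendsto_zero_of_deriv_neg {P P' : ℝ → ℝ} {r : ℝ} (hr : 0 < r)
    (hlim : Tendsto P (𝓝[>] 0) (𝓝 0)) (hP : ∀ x ∈ Ioc 0 r, HasDerivAt P (P' x) x)
    (hP' : ∀ x ∈ Ioo 0 r, P' x < 0) : P r < 0 := by
  have hanti : StrictAntiOn P (Ioc 0 r) :=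
    strictAntiOn_of_deriv_neg (convex_Ioc 0 r)
      (fun x hx => (hP x hx).continuousAt.continuousWithinAt) fun x hx => by
        rw [interior_Ioc] at hx
        rw [(hP x (Ioo_subset_Ioc_self hx)).deriv]
        exact hP' x hx
  have hhalf : r / 2 ∈ Ioc 0 r := ⟨half_pos hr, half_le_self hr.le⟩
  have hle : P (r / 2) ≤ 0 := ge_of_tendsto hlim <| by
    filter_upwards [Ioo_mem_nhdsGT (half_pos hr)] with x hx
    exact hanti.antitoneOn ⟨hx.1, hx.2.le.trans hhalf.2⟩ hhalf hx.2.le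
  exact (hanti hhalf ⟨hr, le_rfl⟩ (half_lt_self hr)).trans_le hle

theorem forall_pos_of_forall_lt_pos {f : ℝ → ℝ} {R : ℝ} (hf : ContinuousOn f (Ioo 0 R))
    (h₀ : ∀ᶠ r in 𝓝[>] 0, 0 < f r)
    (hstep : ∀ r ∈ Ioo 0 R, (∀ s ∈ Ioo 0 r, 0 < f s) → 0 < f r) :
    ∀ r ∈ Ioo 0 R, 0 < f r := by
  by_contra! ⟨x, hx, hfx⟩
  obtain ⟨δ, hδ : 0 < δ, hδf⟩ := mem_nhdsGT_iff_exists_Ioo_subset.1 h₀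
  have hδx : δ ≤ x := not_lt.1 fun h => (hδf ⟨hx.1, h⟩ : 0 < f x).not_ge hfx
  set K := Icc (δ / 2) x ∩ f ⁻¹' Iic 0
  have hK : IsCompact K := isCompact_Icc.of_isClosed_subset
    ((hf.mono (Icc_subset_Ioo (half_pos hδ) hx.2)).preimage_isClosed_of_isClosed isClosed_Icc
      isClosed_Iic) inter_subset_left
  obtain ⟨r, ⟨⟨hr₁, hr₂⟩, hfr⟩, hleast⟩ :=
    hK.exists_isLeast ⟨x, ⟨by linarith, le_rfl⟩, hfx⟩
  refine (hstep r ⟨by linarith, hr₂.trans_lt hx.2⟩ fun s hs => ?_).not_ge hfr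
  by_contra! hfs
  rcases lt_or_ge s δ with hsδ | hδs
  · exact (hδf ⟨hs.1, hsδ⟩ : 0 < f s).not_ge hfs
  · exact hs.2.not_ge (hleast ⟨⟨by linarith, (hs.2.trans_le hr₂).le⟩, hfs⟩)

structure IsPosSolution (n m k α β R : ℝ) (g : ℝ → ℝ) : Prop where
  contDiffOn : ContDiffOn ℝ 2 g (Ioo 0 R)
  pos : ∀ r ∈ Ioo 0 R, 0 < g r
  ode : ∀ r ∈ Ioo 0 R, deriv (deriv fun s => g s ^ m) r
    + (n - 1) / r * deriv (fun s => g s ^ m) r + r ^ k * (α * g r + β * r * deriv g r) = 0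

/-- `(s ^ c * g s ^ m)'`, expanded by the product rule. -/
noncomputable def weightedDeriv (m c : ℝ) (g : ℝ → ℝ) (s : ℝ) : ℝ :=
  c * s ^ (c - 1) * g s ^ m + s ^ c * deriv (fun t => g t ^ m) s

namespace IsPosSolution

variable {n m k α β R r : ℝ} {g : ℝ → ℝ}

theorem hasDerivAt (hg : IsPosSolution n m k α β R g) (hr : r ∈ Ioo 0 R) :
    HasDerivAt g (deriv g r) r :=
  ((hg.contDiffOn.differentiableOn (by norm_num)).differentiableAt
    (isOpen_Ioo.mem_nhds hr)).hasDerivAt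

theorem hasDerivAt_rpow (hg : IsPosSolution n m k α β R g) (hr : r ∈ Ioo 0 R) :
    HasDerivAt (fun s => g s ^ m) (m * g r ^ (m - 1) * deriv g r) r :=
  ((hg.hasDerivAt hr).rpow_const (Or.inl (hg.pos r hr).ne')).congr_deriv (by ring)

theorem hasDerivAt_deriv_rpow (hg : IsPosSolution n m k α β R g) (hr : r ∈ Ioo 0 R) :
    HasDerivAt (deriv fun s => g s ^ m) (deriv (deriv fun s => g s ^ m) r) r := by
  have h : ContDiffOn ℝ 1 (deriv fun s => g s ^ m) (Ioo 0 R) :=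
    (hg.contDiffOn.rpow_const_of_ne fun x hx => (hg.pos x hx).ne').deriv_of_isOpen isOpen_Ioo
      (by norm_num)
  exact ((h.differentiableOn (by norm_num)).differentiableAt (isOpen_Ioo.mem_nhds hr)).hasDerivAt

theorem deriv_deriv_rpow (hg : IsPosSolution n m k α β R g) (hr : r ∈ Ioo 0 R) :
    deriv (deriv fun s => g s ^ m) r = -((n - 1) / r * deriv (fun s => g s ^ m) r
      + r ^ k * (α * g r + β * r * deriv g r)) := by
  linarith [hg.ode r hr]

theorem hasDerivAt_radial_flux (hg : IsPosSolution n m k α β R g) (hr : r ∈ Ioo 0 R) :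
    HasDerivAt (fun s => s ^ (n - 1) * deriv (fun t => g t ^ m) s)
      (-(r ^ (n - 1) * r ^ k * (α * g r + β * r * deriv g r))) r := by
  refine (((hasDerivAt_id' r).rpow_const (p := n - 1) (Or.inl hr.1.ne')).fun_mul
    (hg.hasDerivAt_deriv_rpow hr)).congr_deriv ?_
  rw [hg.deriv_deriv_rpow hr, rpow_sub_one hr.1.ne' (n - 1)]
  field_simp
  ring

theorem tendsto_radial_flux (hg : IsPosSolution n m k α β R g) (hn : 2 < n) (hR : 0 < R)
    {η : ℝ} (hη : 0 < η) (hg₀ : Tendsto g (𝓝[>] 0) (𝓝 η))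
    (hlim : Tendsto (fun s => s * deriv g s) (𝓝[>] 0) (𝓝 0)) :
    Tendsto (fun s => s ^ (n - 1) * deriv (fun t => g t ^ m) s) (𝓝[>] 0) (𝓝 0) := by
  have hpow : Tendsto (fun s : ℝ => s ^ (n - 2)) (𝓝[>] 0) (𝓝 0) := by
    simpa [zero_rpow (by linarith : n - 2 ≠ 0)] using
      (continuousAt_rpow_const 0 (n - 2) (Or.inr (by linarith))).tendsto.mono_left
        nhdsWithin_le_nhds
  have hgm : Tendsto (fun s => g s ^ (m - 1)) (𝓝[>] 0) (𝓝 (η ^ (m - 1))) :=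
    hg₀.rpow_const (Or.inl hη.ne')
  have h := ((hgm.const_mul m).mul hpow).mul hlim
  simp only [mul_zero] at h
  refine h.congr' ?_
  filter_upwards [Ioo_mem_nhdsGT hR] with s hs
  rw [(hg.hasDerivAt_rpow hs).deriv, show n - 1 = n - 2 + 1 by ring, rpow_add_one hs.1.ne']
  ring

theorem deriv_neg (hg : IsPosSolution n m k α β R g) (hm : 0 < m)
    (hP : Tendsto (fun s => s ^ (n - 1) * deriv (fun t => g t ^ m) s) (𝓝[>] 0) (𝓝 0))
    (hr : r ∈ Ioo 0 R) (hpos : ∀ s ∈ Ioo 0 r, 0 < α * g s + β * s * deriv g s) :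
    deriv g r < 0 := by
  have hneg := neg_of_tendsto_zero_of_deriv_neg hr.1 hP
    (fun s hs => hg.hasDerivAt_radial_flux ⟨hs.1, hs.2.trans_lt hr.2⟩) fun s hs => by
      have := hpos s hs
      have := rpow_pos_of_pos hs.1 (n - 1)
      have := rpow_pos_of_pos hs.1 k
      rw [neg_lt_zero]
      positivity
  rw [(hg.hasDerivAt_rpow hr).deriv] at hneg
  by_contra! h
  exact hneg.not_ge (mul_nonneg (rpow_pos_of_pos hr.1 _).le
    (mul_nonneg (mul_nonneg hm.le (rpow_pos_of_pos (hg.pos r hr) _).le) h))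

theorem weightedDeriv_eq (hg : IsPosSolution n m k α β R g) (hβ : β ≠ 0)
    (hr : r ∈ Ioo 0 R) :
    weightedDeriv m (m * α / β) g r
      = m / β * r ^ (m * α / β - 1) * g r ^ (m - 1) * (α * g r + β * r * deriv g r) := by
  rw [weightedDeriv, (hg.hasDerivAt_rpow hr).deriv, rpow_sub_one hr.1.ne',
    rpow_sub_one (hg.pos r hr).ne']
  have := hr.1.ne'
  have := (hg.pos r hr).ne'
  field_simp

theorem hasDerivAt_weightedDeriv (hg : IsPosSolution n m k α β R g) (c : ℝ)
    (hr : r ∈ Ioo 0 R) :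
    HasDerivAt (weightedDeriv m c g) (c * (n - 2 - c) * r ^ (c - 2) * g r ^ m
      + (2 * c - n + 1) / r * weightedDeriv m c g r
      - r ^ c * r ^ k * (α * g r + β * r * deriv g r)) r := by
  have hw := (hg.hasDerivAt_rpow hr).differentiableAt.hasDerivAt
  refine (((((hasDerivAt_id' r).rpow_const (p := c - 1) (Or.inl hr.1.ne')).const_mul c).fun_mul
    hw).add (((hasDerivAt_id' r).rpow_const (p := c) (Or.inl hr.1.ne')).fun_mul
    (hg.hasDerivAt_deriv_rpow hr))).congr_deriv ?_
  have e₁ : r ^ (c - 1) = r ^ c / r := rpow_sub_one hr.1.ne' c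
  have e₂ : r ^ (c - 2) = r ^ c / r / r := by
    rw [show c - 2 = c - 1 - 1 by ring, rpow_sub_one hr.1.ne', e₁]
  rw [weightedDeriv, hg.deriv_deriv_rpow hr, show c - 1 - 1 = c - 2 by ring, e₁, e₂]
  have := hr.1.ne'
  field_simp
  ring

theorem rpow_mul_forcing_eq (hg : IsPosSolution n m k α β R g) (hm : m ≠ 0) (hβ : β ≠ 0)
    (hr : r ∈ Ioo 0 R) :
    r ^ (m * α / β) * r ^ k * (α * g r + β * r * deriv g r)
      = β / m * r ^ (k + 1) * g r ^ (1 - m) * weightedDeriv m (m * α / β) g r := by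
  have hg₁ : g r ^ (1 - m) * g r ^ (m - 1) = 1 := by
    rw [← rpow_add (hg.pos r hr)]
    simp
  rw [hg.weightedDeriv_eq hβ hr, rpow_add_one hr.1.ne', rpow_sub_one hr.1.ne']
  have := hr.1.ne'
  field_simp
  linear_combination (-(r ^ (m * α / β) * r ^ k * (α * g r + β * r * deriv g r))) * hg₁

theorem forcing_pos_of_forall_lt_pos_of_beta_pos (hg : IsPosSolution n m k α β R g) (hm : 0 < m)
    (hα : 0 < α) (hβ : 0 < β) (hratio : α / β ≤ (n - 2) / m) (hr : r ∈ Ioo 0 R)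
    (hpos : ∀ s ∈ Ioo 0 r, 0 < α * g s + β * s * deriv g s) :
    0 < α * g r + β * r * deriv g r := by
  set c := m * α / β
  have hc : 0 ≤ c * (n - 2 - c) := by
    rw [le_div_iff₀ hm] at hratio
    exact mul_nonneg (by positivity) (by linarith [show c = α / β * m by ring])
  have hsub : Icc (r / 2) r ⊆ Ioo 0 R := Icc_subset_Ioo (half_pos hr.1) hr.2
  have hu : ∀ s ∈ Ioo 0 r, 0 < weightedDeriv m c g s := fun s hs => by
    have hs' : s ∈ Ioo 0 R := ⟨hs.1, hs.2.trans hr.2⟩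
    rw [hg.weightedDeriv_eq hβ.ne' hs']
    have := hpos s hs
    have := rpow_pos_of_pos hs.1 (c - 1)
    have := rpow_pos_of_pos (hg.pos s hs') (m - 1)
    positivity
  have hA : ContinuousOn (fun s => (2 * c - n + 1) / s - β / m * s ^ (k + 1) * g s ^ (1 - m))
      (Icc (r / 2) r) := by
    have h₀ : ∀ s ∈ Icc (r / 2) r, s ≠ 0 := fun s hs => (hsub hs).1.ne'
    exact (continuousOn_const.div continuousOn_id h₀).sub ((continuousOn_const.mul
      (continuousOn_id.rpow_const fun s hs => Or.inl (h₀ s hs))).mul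
      ((hg.contDiffOn.continuousOn.mono hsub).rpow_const fun s hs =>
        Or.inl (hg.pos s (hsub hs)).ne'))
  have key : 0 < weightedDeriv m c g r := by
    refine pos_of_pos_of_mul_le_deriv (half_le_self hr.1.le)
      (fun s hs => hg.hasDerivAt_weightedDeriv c (hsub hs)) hA
      (fun s hs => (hu s ⟨(half_pos hr.1).trans hs.1, hs.2⟩).le) (fun s hs => ?_)
      (hu (r / 2) ⟨half_pos hr.1, half_lt_self hr.1⟩)
    have hs' := hsub (Ioo_subset_Icc_self hs)
    rw [hg.rpow_mul_forcing_eq hm.ne' hβ.ne' hs']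
    have := mul_nonneg (mul_nonneg hc (rpow_pos_of_pos hs'.1 (c - 2)).le)
      (rpow_pos_of_pos (hg.pos s hs') m).le
    linarith
  rw [hg.weightedDeriv_eq hβ.ne' hr] at key
  exact pos_of_mul_pos_right key (mul_pos (mul_pos (div_pos hm hβ) (rpow_pos_of_pos hr.1 _))
    (rpow_pos_of_pos (hg.pos r hr) _)).le

theorem forcing_pos (hg : IsPosSolution n m k α β R g) (hm : 0 < m) (hα : 0 < α)
    (hratio : α / β ≤ (n - 2) / m)
    (hP : Tendsto (fun s => s ^ (n - 1) * deriv (fun t => g t ^ m) s) (𝓝[>] 0) (𝓝 0))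
    (h₀ : ∀ᶠ s in 𝓝[>] 0, 0 < α * g s + β * s * deriv g s) :
    ∀ r ∈ Ioo 0 R, 0 < α * g r + β * r * deriv g r := by
  refine forall_pos_of_forall_lt_pos ?_ h₀ fun r hr hpos => ?_
  · have hg' := hg.contDiffOn.continuousOn_deriv_of_isOpen isOpen_Ioo (by norm_num)
    exact (continuousOn_const.mul hg.contDiffOn.continuousOn).add
      ((continuousOn_const.mul continuousOn_id).mul hg')
  rcases le_or_gt β 0 with hβ | hβ
  · have := hg.deriv_neg hm hP hr hpos
    have := mul_pos hα (hg.pos r hr)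
    nlinarith [mul_nonpos_of_nonpos_of_nonneg hβ hr.1.le]
  · exact hg.forcing_pos_of_forall_lt_pos_of_beta_pos hm hα hβ hratio hr hpos

end IsPosSolution

theorem stmt_7_general (n : ℕ) (hn : 3 ≤ n) (m α' β' η R₀ : ℝ)
    (hm0 : 0 < m)
    (hα' : 0 < α') (hratio : α' / β' ≤ ((n : ℝ) - 2) / m)
    (hη : 0 < η)
    (g : ℝ → ℝ)
    (hgc : ContinuousOn g (Ico 0 R₀))
    (hg2 : ContDiffOn ℝ 2 g (Ioo 0 R₀))
    (hgpos : ∀ r ∈ Ioo 0 R₀, 0 < g r)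
    (hg0 : g 0 = η)
    (hlim : Tendsto (fun r => r * deriv g r) (nhdsWithin 0 (Ioi 0)) (nhds 0))
    (hode : ∀ r ∈ Ioo 0 R₀,
      deriv (deriv (fun s => g s ^ m)) r + (((n : ℝ) - 1) / r) * deriv (fun s => g s ^ m) r
        + r ^ (((n : ℝ) - 2 - n * m) / m - 2) * (α' * g r + β' * r * deriv g r) = 0) :
    ∀ r ∈ Ioo 0 R₀, 0 < g r + (β' / α') * r * deriv g r ∧ deriv g r < 0 := by
  intro r hr
  have hR₀ : 0 < R₀ := hr.1.trans hr.2
  have hn' : (2 : ℝ) < n := by exact_mod_cast hn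
  have hg : IsPosSolution n m _ α' β' R₀ g := ⟨hg2, hgpos, hode⟩
  have hg₀ : Tendsto g (𝓝[>] 0) (𝓝 η) :=
    hg0 ▸ ((hgc 0 ⟨le_rfl, hR₀⟩).mono_of_mem_nhdsWithin (Ico_mem_nhdsGT hR₀)).tendsto
  have h₀ : ∀ᶠ s in 𝓝[>] 0, 0 < α' * g s + β' * s * deriv g s := by
    have hf := (hg₀.const_mul α').add (hlim.const_mul β')
    filter_upwards [hf.eventually (lt_mem_nhds (by simpa using mul_pos hα' hη))] with s hs
    simpa only [mul_assoc] using hs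
  have hP := hg.tendsto_radial_flux hn' hR₀ hη hg₀ hlim
  have hF := hg.forcing_pos hm0 hα' hratio hP h₀
  refine ⟨?_, hg.deriv_neg hm0 hP hr fun s hs => hF s ⟨hs.1, hs.2.trans hr.2⟩⟩
  have e : α' * (g r + β' / α' * r * deriv g r) = α' * g r + β' * r * deriv g r := by
    field_simp
  exact pos_of_mul_pos_right (e ▸ hF r hr) hα'.le

theorem stmt_7 (n : ℕ) (hn : 3 ≤ n) (m α' β' η R₀ : ℝ)
    (hm0 : 0 < m) (hm1 : m ≤ ((n : ℝ) - 2) / n)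
    (hα' : 0 < α') (hβ' : β' ≠ 0) (hratio : α' / β' ≤ ((n : ℝ) - 2) / m)
    (hη : 0 < η) (hR₀ : 0 < R₀)
    (g : ℝ → ℝ)
    (hgc : ContinuousOn g (Ico 0 R₀))
    (hg2 : ContDiffOn ℝ 2 g (Ioo 0 R₀))
    (hgpos : ∀ r ∈ Ioo 0 R₀, 0 < g r)
    (hg0 : g 0 = η)
    (hlim : Tendsto (fun r => r * deriv g r) (nhdsWithin 0 (Ioi 0)) (nhds 0))
    (hode : ∀ r ∈ Ioo 0 R₀,
      deriv (deriv (fun s => g s ^ m)) r + (((n : ℝ) - 1) / r) * deriv (fun s => g s ^ m) r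
        + r ^ (((n : ℝ) - 2 - n * m) / m - 2) * (α' * g r + β' * r * deriv g r) = 0) :
    ∀ r ∈ Ioo 0 R₀, 0 < g r + (β' / α') * r * deriv g r ∧ deriv g r < 0 :=
  stmt_7_general n hn m α' β' η R₀ hm0 hα' hratio hη g hgc hg2 hgpos hg0 hlim hode
end

section
/- Let n ≥ 3, 0 < m ≤ (n-2)/n, α̃ > 0, β̃ ≠ 0 with α̃/β̃ ≤ (n-2)/m. Let g be a positive C² solution on (0,R₀) of the ODE (g^m)'' + ((n-1)/r)(g^m)' + r^{(n-2-nm)/m - 2}(α̃ g + β̃ r g') = 0, continuous up to 0 with g(0) = η > 0 and lim_{r→0⁺} r g'(r) = 0. Then the function h₁(r) := g(r) + (β̃/α̃) r g'(r) satisfies the first-order linear differential inequality h₁' + { (n-2-(mα̃/β̃))/r - (1-m) g'/g + (β̃/m) r^{(n-2-nm)/m - 1} g^{1-m} } h₁ = (n-2-(mα̃/β̃)) g/r ≥ 0 on (0,R₀). -/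
open Set Filter

private lemma key_alg (n m α' β' r P G' G'' a b : ℝ) (hr : r ≠ 0) (hP : P ≠ 0) (ha : a ≠ 0)
    (hm : m ≠ 0) (hα : α' ≠ 0) (hβ : β' ≠ 0)
    (E : (G'' * m * a + (G' * m) * (G' * (m - 1) * (a / P)))
        + ((n - 1) / r) * (G' * m * a) + b * (α' * P + β' * r * G') = 0) :
    (G' + (β' / α') * (1 * G' + r * G''))
      + ((n - 2 - m * α' / β') / r - (1 - m) * G' / P + (β' / m) * (b * r) * a⁻¹)
        * (P + (β' / α') * r * G')
      = (n - 2 - m * α' / β') * P / r := by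
  have hG'' : G'' = -(G' * G' * (m - 1) / P + ((n - 1) / r) * G'
      + b * (α' * P + β' * r * G') / (m * a)) := by
    field_simp at E ⊢
    linear_combination E
  rw [hG'']
  field_simp
  ring

theorem stmt_8 (n : ℕ) (hn : 3 ≤ n) (m α' β' η R₀ : ℝ)
    (hm0 : 0 < m) (hm1 : m ≤ ((n : ℝ) - 2) / n)
    (hα' : 0 < α') (hβ' : β' ≠ 0) (hratio : α' / β' ≤ ((n : ℝ) - 2) / m)
    (hη : 0 < η) (hR₀ : 0 < R₀)
    (g : ℝ → ℝ)
    (hgc : ContinuousOn g (Ico 0 R₀))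
    (hg2 : ContDiffOn ℝ 2 g (Ioo 0 R₀))
    (hgpos : ∀ r ∈ Ioo 0 R₀, 0 < g r)
    (hg0 : g 0 = η)
    (hlim : Tendsto (fun r => r * deriv g r) (nhdsWithin 0 (Ioi 0)) (nhds 0))
    (hode : ∀ r ∈ Ioo 0 R₀,
      deriv (deriv (fun s => g s ^ m)) r + (((n : ℝ) - 1) / r) * deriv (fun s => g s ^ m) r
        + r ^ (((n : ℝ) - 2 - n * m) / m - 2) * (α' * g r + β' * r * deriv g r) = 0) :
    ∀ r ∈ Ioo 0 R₀,
      deriv (fun s => g s + (β' / α') * s * deriv g s) r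
          + ((((n : ℝ) - 2 - m * α' / β') / r) - (1 - m) * deriv g r / g r
              + (β' / m) * r ^ (((n : ℝ) - 2 - n * m) / m - 1) * g r ^ (1 - m))
            * (g r + (β' / α') * r * deriv g r)
        = ((n : ℝ) - 2 - m * α' / β') * g r / r ∧
      0 ≤ ((n : ℝ) - 2 - m * α' / β') * g r / r := by
  -- nonnegativity of the constant
  have hA : 0 ≤ (n : ℝ) - 2 - m * α' / β' := by
    have h1 : m * (α' / β') ≤ m * (((n : ℝ) - 2) / m) :=
      mul_le_mul_of_nonneg_left hratio hm0.le
    have h2 : m * (((n : ℝ) - 2) / m) = (n : ℝ) - 2 := by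
      field_simp
    rw [h2] at h1
    have h3 : m * α' / β' = m * (α' / β') := by ring
    rw [h3]
    linarith
  intro r hr
  obtain ⟨hr0, hrR⟩ := hr
  have hrne : r ≠ 0 := ne_of_gt hr0
  have hU : IsOpen (Ioo (0 : ℝ) R₀) := isOpen_Ioo
  have hmem : Ioo (0 : ℝ) R₀ ∈ nhds r := hU.mem_nhds ⟨hr0, hrR⟩
  have hgd : ∀ s ∈ Ioo (0 : ℝ) R₀, HasDerivAt g (deriv g s) s := by
    intro s hs
    exact ((hg2.differentiableOn (by norm_num)).differentiableAt
      (hU.mem_nhds hs)).hasDerivAt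
  have hg'c : ContDiffOn ℝ 1 (deriv g) (Ioo 0 R₀) := by
    exact hg2.deriv_of_isOpen hU (by norm_num : (1 : WithTop ℕ∞) + 1 ≤ 2)
  have hg'd : HasDerivAt (deriv g) (deriv (deriv g) r) r :=
    ((hg'c.differentiableOn (by norm_num)).differentiableAt hmem).hasDerivAt
  have hgP : 0 < g r := hgpos r ⟨hr0, hrR⟩
  -- derivative of h₁
  have hd1 : deriv (fun s => g s + (β' / α') * s * deriv g s) r
      = deriv g r + (β' / α') * (1 * deriv g r + r * deriv (deriv g) r) := by
    have h2 : HasDerivAt (fun s : ℝ => s * deriv g s)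
        (1 * deriv g r + r * deriv (deriv g) r) r :=
      (hasDerivAt_id r).mul hg'd
    have h3 : HasDerivAt (fun s => g s + (β' / α') * (s * deriv g s))
        (deriv g r + (β' / α') * (1 * deriv g r + r * deriv (deriv g) r)) r :=
      (hgd r ⟨hr0, hrR⟩).add (h2.const_mul _)
    have heq : (fun s => g s + (β' / α') * s * deriv g s)
        = fun s => g s + (β' / α') * (s * deriv g s) := by
      funext s; ring
    rw [heq]
    exact h3.deriv
  -- derivative of g^m
  have hφd : ∀ s ∈ Ioo (0 : ℝ) R₀, HasDerivAt (fun t => g t ^ m)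
      (deriv g s * m * g s ^ (m - 1)) s := fun s hs =>
    (hgd s hs).rpow_const (Or.inl (ne_of_gt (hgpos s hs)))
  have hφ1 : deriv (fun t => g t ^ m) r = deriv g r * m * g r ^ (m - 1) :=
    (hφd r ⟨hr0, hrR⟩).deriv
  have hφev : deriv (fun t => g t ^ m) =ᶠ[nhds r]
      fun s => deriv g s * m * g s ^ (m - 1) := by
    filter_upwards [hmem] with s hs
    exact (hφd s hs).deriv
  have hd2 : deriv (deriv (fun t => g t ^ m)) r
      = deriv (deriv g) r * m * g r ^ (m - 1)
        + (deriv g r * m) * (deriv g r * (m - 1) * g r ^ (m - 1 - 1)) := by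
    rw [hφev.deriv_eq]
    have h1 : HasDerivAt (fun s => deriv g s * m) (deriv (deriv g) r * m) r :=
      hg'd.mul_const m
    have h2 : HasDerivAt (fun s => g s ^ (m - 1))
        (deriv g r * (m - 1) * g r ^ (m - 1 - 1)) r :=
      (hgd r ⟨hr0, hrR⟩).rpow_const (Or.inl (ne_of_gt hgP))
    exact (h1.mul h2).deriv
  -- rpow identities
  have ha1 : g r ^ (m - 1 - 1) = g r ^ (m - 1) / g r := by
    rw [Real.rpow_sub hgP, Real.rpow_one]
  have ha2 : g r ^ (1 - m) = (g r ^ (m - 1))⁻¹ := by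
    rw [show (1 - m) = -(m - 1) by ring, Real.rpow_neg hgP.le]
  have hb : r ^ (((n : ℝ) - 2 - n * m) / m - 1)
      = r ^ (((n : ℝ) - 2 - n * m) / m - 2) * r := by
    rw [show ((n : ℝ) - 2 - n * m) / m - 1 = (((n : ℝ) - 2 - n * m) / m - 2) + 1 by ring,
      Real.rpow_add hr0, Real.rpow_one]
  have hapos : (0 : ℝ) < g r ^ (m - 1) := Real.rpow_pos_of_pos hgP _
  have E := hode r ⟨hr0, hrR⟩
  rw [hφ1, hd2, ha1] at E
  rw [hd1, ha2, hb]
  constructor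
  · have := key_alg (n : ℝ) m α' β' r (g r) (deriv g r) (deriv (deriv g) r)
      (g r ^ (m - 1)) (r ^ (((n : ℝ) - 2 - n * m) / m - 2)) hrne (ne_of_gt hgP)
      (ne_of_gt hapos) (ne_of_gt hm0) (ne_of_gt hα') hβ' (by linarith [E])
    linarith [this]
  · exact div_nonneg (mul_nonneg hA hgP.le) hr0.le
end

section
/- Let n ≥ 3, 0 < m < (n-2)/n. Suppose g : [0,ε) → ℝ is continuous with g(0) = η > 0, g is C¹ on (0,ε), and on (0,ε) it satisfies g'(r) = -(g(r)^{1-m}/(m r^{n-1})) ∫₀^r ρ^{n-3+(n-2-nm)/m} (α̃ g(ρ) + β̃ ρ g'(ρ)) dρ, where rg'(r) is bounded on (0,ε). If 0 < m < (n-2)/(n+1), then lim_{r→0⁺} g'(r) = 0; if (n-2)/(n+1) ≤ m < (n-2)/n, then lim_{r→0⁺} r^{δ₁} g'(r) = -α̃ η^{2-m}/(n-2-2m), where δ₁ = 1 - (n-2-nm)/m. -/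
open Set Filter Topology Asymptotics MeasureTheory intervalIntegral

/-!
With `σ = (n-2-nm)/m` and `p = n-3+σ > -1`, the integrand `h ρ = α̃ g ρ + β̃ ρ g' ρ` tends to
`α̃ η` as `ρ → 0⁺`, so the weighted mean `(p+1) r^{-(p+1)} ∫₀^r ρ^p h` tends to `α̃ η` as well.
Since `n - 1 = δ₁ + (p+1)`, the integral identity then gives, for every admissible `m`,
`r^δ₁ g' r → -(η^{1-m}/m) · α̃ η/(p+1) = -α̃ η^{2-m}/(n-2-2m)`.
If `m < (n-2)/(n+1)` then `σ > 1`, i.e. `δ₁ < 0`, and `g' r = r^{σ-1} · r^δ₁ g' r → 0`.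
-/

lemma integral_rpow_mul_isLittleO {p : ℝ} (hp : -1 < p) {k : ℝ → ℝ}
    (hk : Tendsto k (𝓝[>] 0) (𝓝 0)) :
    (fun r => ∫ ρ in (0 : ℝ)..r, ρ ^ p * k ρ) =o[𝓝[>] 0] fun r => r ^ (p + 1) := by
  have hp1 : 0 < p + 1 := by linarith
  refine IsLittleO.of_bound fun c hc => ?_
  obtain ⟨r₁, hr₁, hk₁⟩ := (nhdsGT_basis (0 : ℝ)).eventually_iff.1
    (hk.norm.eventually (eventually_le_nhds (by simpa using mul_pos hc hp1)))
  filter_upwards [Ioo_mem_nhdsGT hr₁] with r hr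
  have hbound : ∀ᵐ ρ, ρ ∈ Ioc 0 r → ‖ρ ^ p * k ρ‖ ≤ ρ ^ p * (c * (p + 1)) := by
    refine .of_forall fun ρ hρ => ?_
    rw [norm_mul, Real.norm_of_nonneg (Real.rpow_nonneg hρ.1.le p)]
    exact mul_le_mul_of_nonneg_left (hk₁ ⟨hρ.1, hρ.2.trans_lt hr.2⟩) (Real.rpow_nonneg hρ.1.le p)
  calc ‖∫ ρ in (0 : ℝ)..r, ρ ^ p * k ρ‖
      ≤ ∫ ρ in (0 : ℝ)..r, ρ ^ p * (c * (p + 1)) :=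
        norm_integral_le_of_norm_le hr.1.le hbound ((intervalIntegrable_rpow' hp).mul_const _)
    _ = c * ‖r ^ (p + 1)‖ := by
        rw [intervalIntegral.integral_mul_const, integral_rpow (.inl hp), Real.zero_rpow hp1.ne',
          Real.norm_of_nonneg (Real.rpow_nonneg hr.1.le _)]
        field_simp
        ring

lemma eventually_intervalIntegrable_rpow_mul {p L : ℝ} (hp : -1 < p) {h : ℝ → ℝ}
    (hmeas : StronglyMeasurableAtFilter h (𝓝[>] 0)) (hh : Tendsto h (𝓝[>] 0) (𝓝 L)) :
    ∀ᶠ r in 𝓝[>] 0, IntervalIntegrable (fun ρ => ρ ^ p * h ρ) volume 0 r := by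
  obtain ⟨s, hs, hsm⟩ := hmeas
  obtain ⟨r₁, hr₁, hs₁⟩ := (nhdsGT_basis (0 : ℝ)).eventually_iff.1
    ((hh.norm.eventually (eventually_le_nhds (lt_add_one ‖L‖))).and hs)
  filter_upwards [Ioo_mem_nhdsGT hr₁] with r hr
  have hsub : Ioc 0 r ⊆ Ioo 0 r₁ := fun ρ hρ => ⟨hρ.1, hρ.2.trans_lt hr.2⟩
  rw [intervalIntegrable_iff_integrableOn_Ioc_of_le hr.1.le]
  refine Integrable.mul_bdd (c := ‖L‖ + 1) ((intervalIntegrable_rpow' hp).1)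
    (hsm.mono_set fun ρ hρ => (hs₁ (hsub hρ)).2) ?_
  exact ae_restrict_of_forall_mem measurableSet_Ioc fun ρ hρ => (hs₁ (hsub hρ)).1

lemma tendsto_integral_rpow_mul_div_rpow {p L : ℝ} (hp : -1 < p) {h : ℝ → ℝ}
    (hmeas : StronglyMeasurableAtFilter h (𝓝[>] 0)) (hh : Tendsto h (𝓝[>] 0) (𝓝 L)) :
    Tendsto (fun r => (∫ ρ in (0 : ℝ)..r, ρ ^ p * h ρ) / r ^ (p + 1)) (𝓝[>] 0)
      (𝓝 (L / (p + 1))) := by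
  have hp1 : 0 < p + 1 := by linarith
  have hsmall := (integral_rpow_mul_isLittleO hp (k := fun ρ => h ρ - L)
    (by simpa using hh.sub_const L)).tendsto_div_nhds_zero.const_add (L / (p + 1))
  rw [add_zero] at hsmall
  refine hsmall.congr' ?_
  filter_upwards [eventually_intervalIntegrable_rpow_mul hp hmeas hh, self_mem_nhdsWithin]
    with r hint (hr : 0 < r)
  have hr' : r ^ (p + 1) ≠ 0 := (Real.rpow_pos_of_pos hr _).ne'
  simp only [mul_sub]
  rw [integral_sub hint ((intervalIntegrable_rpow' hp).mul_const L),
    intervalIntegral.integral_mul_const, integral_rpow (.inl hp), Real.zero_rpow hp1.ne']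
  field_simp
  ring

lemma tendsto_zero_of_tendsto_rpow_neg_mul {s L : ℝ} (hs : 0 < s) {f : ℝ → ℝ}
    (hf : Tendsto (fun r => r ^ (-s) * f r) (𝓝[>] 0) (𝓝 L)) :
    Tendsto f (𝓝[>] 0) (𝓝 0) := by
  have hpow : Tendsto (fun r : ℝ => r ^ s) (𝓝[>] 0) (𝓝 0) := by
    simpa [Real.zero_rpow hs.ne'] using
      (Real.continuousAt_rpow_const 0 s (.inr hs.le)).tendsto.mono_left nhdsWithin_le_nhds
  refine (zero_mul L ▸ hpow.mul hf).congr' ?_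
  filter_upwards [self_mem_nhdsWithin] with r (hr : 0 < r)
  rw [← mul_assoc, ← Real.rpow_add hr, add_neg_cancel, Real.rpow_zero, one_mul]

lemma tendsto_rpow_mul_of_eq_div_rpow_mul_integral {p q a c L : ℝ} (hp : -1 < p) (ha : 0 < a)
    {f G h : ℝ → ℝ}
    (hf : ∀ r ∈ Ioo 0 a, f r = G r / r ^ (q + (p + 1)) * ∫ ρ in (0 : ℝ)..r, ρ ^ p * h ρ)
    (hG : Tendsto G (𝓝[>] 0) (𝓝 c)) (hmeas : StronglyMeasurableAtFilter h (𝓝[>] 0))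
    (hh : Tendsto h (𝓝[>] 0) (𝓝 L)) :
    Tendsto (fun r => r ^ q * f r) (𝓝[>] 0) (𝓝 (c * (L / (p + 1)))) := by
  refine (hG.mul (tendsto_integral_rpow_mul_div_rpow hp hmeas hh)).congr' ?_
  filter_upwards [Ioo_mem_nhdsGT ha] with r hr
  have hq := (Real.rpow_pos_of_pos hr.1 q).ne'
  have hp1 := (Real.rpow_pos_of_pos hr.1 (p + 1)).ne'
  rw [hf r hr, Real.rpow_add hr.1 q (p + 1)]
  field_simp

lemma ContinuousOn.stronglyMeasurableAtFilter_nhdsGT {f : ℝ → ℝ} {a b : ℝ} (hab : a < b)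
    (hf : ContinuousOn f (Ioo a b)) : StronglyMeasurableAtFilter f (𝓝[>] a) :=
  nhdsWithin_Ioo_eq_nhdsGT hab ▸ hf.stronglyMeasurableAtFilter_nhdsWithin measurableSet_Ioo a

theorem stmt_10_general (n : ℕ) (hn : 3 ≤ n) (m α' β' η ε δ₁ : ℝ)
    (hm0 : 0 < m) (hm1 : m < ((n : ℝ) - 2) / n)
    (hη : 0 < η) (hε : 0 < ε)
    (g : ℝ → ℝ)
    (hgc : ContinuousOn g (Ico 0 ε))
    (hg1 : ContDiffOn ℝ 1 g (Ioo 0 ε))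
    (hg0 : g 0 = η)
    (hlim0 : Tendsto (fun r => r * deriv g r) (nhdsWithin 0 (Ioi 0)) (nhds 0))
    (hint : ∀ r ∈ Ioo 0 ε,
      deriv g r = -(g r ^ (1 - m) / (m * r ^ ((n : ℝ) - 1))) *
        ∫ ρ in (0 : ℝ)..r,
          ρ ^ ((n : ℝ) - 3 + ((n : ℝ) - 2 - n * m) / m) * (α' * g ρ + β' * ρ * deriv g ρ))
    (hδ₁ : δ₁ = 1 - ((n : ℝ) - 2 - n * m) / m) :
    (m < ((n : ℝ) - 2) / (n + 1) →
        Tendsto (deriv g) (nhdsWithin 0 (Ioi 0)) (nhds 0)) ∧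
      (((n : ℝ) - 2) / (n + 1) ≤ m →
        Tendsto (fun r => r ^ δ₁ * deriv g r) (nhdsWithin 0 (Ioi 0))
          (nhds (-(α' * η ^ (2 - m) / ((n : ℝ) - 2 - 2 * m))))) := by
  have hn3 : (3 : ℝ) ≤ n := by exact_mod_cast hn
  set σ := ((n : ℝ) - 2 - n * m) / m with hσ_def
  have hσ : 0 < σ := div_pos (by nlinarith [(lt_div_iff₀ (by linarith)).1 hm1]) hm0
  set p := (n : ℝ) - 3 + σ with hp_def
  have hp : -1 < p := by linarith
  have hg : Tendsto g (𝓝[>] 0) (𝓝 η) :=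
    hg0 ▸ nhdsWithin_Ioo_eq_nhdsGT hε ▸ (hgc 0 ⟨le_rfl, hε⟩).mono Ioo_subset_Ico_self
  have hlim : Tendsto (fun ρ => α' * g ρ + β' * ρ * deriv g ρ) (𝓝[>] 0) (𝓝 (α' * η)) := by
    simpa [mul_assoc] using (hg.const_mul α').add (hlim0.const_mul β')
  have hmeas : StronglyMeasurableAtFilter (fun ρ => α' * g ρ + β' * ρ * deriv g ρ) (𝓝[>] 0) := by
    have hg_cont := hg1.continuousOn
    have hg'_cont := hg1.continuousOn_deriv_of_isOpen isOpen_Ioo le_rfl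
    exact ContinuousOn.stronglyMeasurableAtFilter_nhdsGT hε (by fun_prop)
  have hlimit := tendsto_rpow_mul_of_eq_div_rpow_mul_integral hp hε (q := δ₁) (f := deriv g)
    (fun r hr => by rw [hint r hr, show (n : ℝ) - 1 = δ₁ + (p + 1) by rw [hδ₁, hp_def]; ring]; ring)
    ((hg.rpow_const (p := 1 - m) (.inl hη.ne')).div_const m).neg hmeas hlim
  have hconst : -(η ^ (1 - m) / m) * (α' * η / (p + 1)) =
      -(α' * η ^ (2 - m) / ((n : ℝ) - 2 - 2 * m)) := by
    have hmp : m * (p + 1) = (n : ℝ) - 2 - 2 * m := by rw [hp_def, hσ_def]; field_simp; ring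
    rw [show (2 : ℝ) - m = (1 - m) + 1 by ring, Real.rpow_add hη, Real.rpow_one, ← hmp]
    field_simp
  rw [hconst] at hlimit
  refine ⟨fun hm2 => ?_, fun _ => hlimit⟩
  have hσ1 : 0 < σ - 1 := by
    rw [sub_pos, hσ_def, lt_div_iff₀ hm0]
    nlinarith [(lt_div_iff₀ (by linarith)).1 hm2]
  rw [show δ₁ = -(σ - 1) by rw [hδ₁]; ring] at hlimit
  exact tendsto_zero_of_tendsto_rpow_neg_mul hσ1 hlimit

theorem stmt_10 (n : ℕ) (hn : 3 ≤ n) (m α' β' η ε δ₁ : ℝ)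
    (hm0 : 0 < m) (hm1 : m < ((n : ℝ) - 2) / n)
    (hα' : 0 < α') (hβ' : 0 < β') (hη : 0 < η) (hε : 0 < ε)
    (g : ℝ → ℝ)
    (hgc : ContinuousOn g (Ico 0 ε))
    (hg1 : ContDiffOn ℝ 1 g (Ioo 0 ε))
    (hgpos : ∀ r ∈ Ioo 0 ε, 0 < g r)
    (hg0 : g 0 = η)
    (hbd : ∃ C : ℝ, ∀ r ∈ Ioo 0 ε, |r * deriv g r| ≤ C)
    (hlim0 : Tendsto (fun r => r * deriv g r) (nhdsWithin 0 (Ioi 0)) (nhds 0))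
    (hint : ∀ r ∈ Ioo 0 ε,
      deriv g r = -(g r ^ (1 - m) / (m * r ^ ((n : ℝ) - 1))) *
        ∫ ρ in (0 : ℝ)..r,
          ρ ^ ((n : ℝ) - 3 + ((n : ℝ) - 2 - n * m) / m) * (α' * g ρ + β' * ρ * deriv g ρ))
    (hδ₁ : δ₁ = 1 - ((n : ℝ) - 2 - n * m) / m) :
    (m < ((n : ℝ) - 2) / (n + 1) →
        Tendsto (deriv g) (nhdsWithin 0 (Ioi 0)) (nhds 0)) ∧
      (((n : ℝ) - 2) / (n + 1) ≤ m →
        Tendsto (fun r => r ^ δ₁ * deriv g r) (nhdsWithin 0 (Ioi 0))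
          (nhds (-(α' * η ^ (2 - m) / ((n : ℝ) - 2 - 2 * m))))) :=
  stmt_10_general n hn m α' β' η ε δ₁ hm0 hm1 hη hε g hgc hg1 hg0 hlim0 hint hδ₁
end

section
/- Let n ≥ 3, 0 < m < (n-2)/n, α < 0, β < 0 with 2/(1-m) < α/β < (n-2)/m. Suppose f : (0,∞) → (0,∞) is C² satisfying the radial equation (f^m)'' + ((n-1)/r)(f^m)' + αf + βr f' = 0 on (0,∞) and lim_{r→∞} r^{(n-2)/m} f(r) = η for some η > 0. Then αf(r) + βr f'(r) > 0 for all r > 0; equivalently, since Δf^m = -(αf + βr f'), one has Δf^m < 0 on (0,∞). -/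
/-!
Put `γ = α / β > 0` and `g r = r ^ γ * f r`. Then `g' r = r ^ (γ - 1) * (r f' + γ f)` and
`α f + β r f' = β (r f' + γ f)`, so the claim says that `g' < 0` everywhere. Since
`γ < (n - 2) / m`, the decay of `f` gives `g → 0` at infinity. At a critical point of `g` the
equation reduces to `(f ^ m)'' + (n - 1) / r (f ^ m)' = 0`, and then
`g'' = γ (n - 2 - m γ) r ^ (γ - 2) f > 0`. If `g' ≥ 0` at some point, `g` rises to the right of
it and, tending to `0`, attains an interior maximum on some interval; that maximum is a critical
point with `g'' > 0`, which is absurd.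
-/

open Set Filter Topology

theorem HasDerivAt.eventually_nhdsGT_lt {f : ℝ → ℝ} {f' x : ℝ} (hf : HasDerivAt f f' x)
    (hf' : 0 < f') : ∀ᶠ y in 𝓝[>] x, f x < f y := by
  filter_upwards [nhdsGT_le_nhdsNE x
      ((hasDerivAt_iff_tendsto_slope.mp hf).eventually (eventually_gt_nhds hf')),
    self_mem_nhdsWithin] with y hslope hy
  exact (slope_pos_iff hy).mp hslope

theorem eventually_nhdsGT_lt_of_deriv_deriv_pos {f : ℝ → ℝ} {x : ℝ}
    (hf : 0 < deriv (deriv f) x) (hd : deriv f x = 0) (hc : ContinuousAt f x) :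
    ∀ᶠ y in 𝓝[>] x, f x < f y := by
  have hpos : ∀ᶠ y in 𝓝[>] x, 0 < deriv f y := deriv_pos_right_of_sign_deriv <|
    nhdsWithin_le_nhds <| eventually_nhdsWithin_sign_eq_of_deriv_pos hf hd
  obtain ⟨u, hxu, hu⟩ := mem_nhdsGT_iff_exists_Ioo_subset.mp hpos
  filter_upwards [Ioo_mem_nhdsGT hxu] with y hy
  have hmono : StrictMonoOn f (Icc x y) := by
    refine strictMonoOn_of_deriv_pos (convex_Icc x y) (fun z hz => ?_) (fun z hz => ?_)
    · rcases hz.1.eq_or_lt with rfl | hxz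
      · exact hc.continuousWithinAt
      · exact (differentiableAt_of_deriv_ne_zero
          (hu ⟨hxz, hz.2.trans_lt hy.2⟩).ne').continuousAt.continuousWithinAt
    · rw [interior_Icc] at hz
      exact hu ⟨hz.1, hz.2.trans hy.2⟩
  exact hmono (left_mem_Icc.mpr hy.1.le) (right_mem_Icc.mpr hy.1.le) hy.1

theorem deriv_neg_of_tendsto_zero {g : ℝ → ℝ} {a : ℝ}
    (hd : ∀ x ∈ Ioi a, DifferentiableAt ℝ g x) (hpos : ∀ x ∈ Ioi a, 0 < g x)
    (hlim : Tendsto g atTop (𝓝 0))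
    (hcrit : ∀ x ∈ Ioi a, deriv g x = 0 → 0 < deriv (deriv g) x) :
    ∀ x ∈ Ioi a, deriv g x < 0 := by
  have hrise : ∀ x ∈ Ioi a, 0 ≤ deriv g x → ∀ᶠ y in 𝓝[>] x, g x < g y := by
    intro x hx hx'
    rcases hx'.eq_or_lt with h0 | h0
    · exact eventually_nhdsGT_lt_of_deriv_deriv_pos (hcrit x hx h0.symm) h0.symm
        (hd x hx).continuousAt
    · exact (hd x hx).hasDerivAt.eventually_nhdsGT_lt h0
  intro r hr
  by_contra! hr'
  obtain ⟨t, hgt, hrt⟩ := ((hrise r hr hr').and self_mem_nhdsWithin).exists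
  obtain ⟨R, hgR, htR⟩ :=
    ((hlim.eventually (eventually_lt_nhds (hpos r hr))).and (eventually_gt_atTop t)).exists
  have hsub : Icc r R ⊆ Ioi a := fun z hz => lt_of_lt_of_le hr hz.1
  obtain ⟨c, hc, hmax⟩ :=
    isCompact_Icc.exists_isMaxOn (nonempty_Icc.mpr (hrt.le.trans htR.le))
      (fun z hz => (hd z (hsub hz)).continuousAt.continuousWithinAt)
  have hgc : g t ≤ g c := hmax ⟨hrt.le, htR.le⟩
  have hrc : r < c := hc.1.lt_of_ne (by rintro rfl; linarith)
  have hcR : c < R := hc.2.lt_of_ne (by rintro rfl; linarith)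
  have hloc : IsLocalMax g c := hmax.isLocalMax (Icc_mem_nhds hrc hcR)
  obtain ⟨y, hy, hy'⟩ := ((hrise c (hsub hc) hloc.deriv_eq_zero.ge).and
    (nhdsWithin_le_nhds hloc)).exists
  exact hy.not_ge hy'

theorem hasDerivAt_rpow_mul {f : ℝ → ℝ} {f' x : ℝ} (hf : HasDerivAt f f' x) (hx : x ≠ 0)
    (γ : ℝ) : HasDerivAt (fun y => y ^ γ * f y) (x ^ (γ - 1) * (x * f' + γ * f x)) x := by
  refine ((Real.hasDerivAt_rpow_const (p := γ) (Or.inl hx)).mul hf).congr_deriv ?_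
  rw [Real.rpow_sub_one hx]
  field_simp
  ring

theorem deriv_deriv_rpow_mul {f : ℝ → ℝ} {c : ℝ} (γ : ℝ) (hc : c ≠ 0)
    (hf : ∀ᶠ y in 𝓝 c, DifferentiableAt ℝ f y) (hf' : DifferentiableAt ℝ (deriv f) c)
    (hw : c * deriv f c + γ * f c = 0) :
    deriv (deriv fun y => y ^ γ * f y) c =
      c ^ (γ - 1) * (c * deriv (deriv f) c + (1 + γ) * deriv f c) := by
  have hd : deriv (fun y => y ^ γ * f y) =ᶠ[𝓝 c]
      fun y => y ^ (γ - 1) * (y * deriv f y + γ * f y) := by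
    filter_upwards [hf, eventually_ne_nhds hc] with y hy hy0
    exact (hasDerivAt_rpow_mul hy.hasDerivAt hy0 γ).deriv
  have hdw : HasDerivAt (fun y => y * deriv f y + γ * f y)
      (deriv f c + c * deriv (deriv f) c + γ * deriv f c) c :=
    (((hasDerivAt_id c).mul hf'.hasDerivAt).add
      (hf.self_of_nhds.hasDerivAt.const_mul γ)).congr_deriv (by simp)
  rw [hd.deriv_eq, ((Real.hasDerivAt_rpow_const (p := γ - 1) (Or.inl hc)).fun_mul hdw).deriv, hw]
  ring

theorem deriv_deriv_rpow_comp {f : ℝ → ℝ} {x : ℝ} (p : ℝ)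
    (hf : ∀ᶠ y in 𝓝 x, DifferentiableAt ℝ f y) (hf' : DifferentiableAt ℝ (deriv f) x)
    (hx : 0 < f x) :
    deriv (deriv fun y => f y ^ p) x =
      p * f x ^ (p - 2) * ((p - 1) * deriv f x ^ 2 + f x * deriv (deriv f) x) := by
  have hne : ∀ᶠ y in 𝓝 x, f y ≠ 0 := hf.self_of_nhds.continuousAt.eventually_ne hx.ne'
  have hd : deriv (fun y => f y ^ p) =ᶠ[𝓝 x] fun y => deriv f y * p * f y ^ (p - 1) := by
    filter_upwards [hf, hne] with y hy hy0
    exact (hy.hasDerivAt.rpow_const (Or.inl hy0)).deriv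
  rw [hd.deriv_eq]
  have h := (hf'.hasDerivAt.mul_const p).mul (hf.self_of_nhds.hasDerivAt.rpow_const
    (p := p - 1) (Or.inl hx.ne'))
  refine h.deriv.trans ?_
  rw [show p - 1 - 1 = p - 2 by ring, show p - 1 = p - 2 + 1 by ring,
    Real.rpow_add_one hx.ne']
  ring

theorem tendsto_rpow_mul_zero_of_tendsto {f : ℝ → ℝ} {γ d η : ℝ}
    (h : Tendsto (fun r => r ^ d * f r) atTop (𝓝 η)) (hγd : γ < d) :
    Tendsto (fun r => r ^ γ * f r) atTop (𝓝 0) := by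
  have hdecay : Tendsto (fun r : ℝ => r ^ (γ - d)) atTop (𝓝 0) := by
    simpa only [neg_sub] using tendsto_rpow_neg_atTop (sub_pos.mpr hγd)
  refine (zero_mul η ▸ hdecay.mul h).congr' ?_
  filter_upwards [eventually_gt_atTop 0] with r hr
  rw [← mul_assoc, ← Real.rpow_add hr, sub_add_cancel]

theorem deriv_deriv_rpow_mul_pos_of_radial {f : ℝ → ℝ} {n m γ r : ℝ} (hr : 0 < r)
    (hm : 0 < m) (hγ : 0 < γ) (hmγ : m * γ < n - 2)
    (hf : ∀ᶠ y in 𝓝 r, DifferentiableAt ℝ f y) (hf' : DifferentiableAt ℝ (deriv f) r)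
    (hfr : 0 < f r)
    (hlap : deriv (deriv fun s => f s ^ m) r + (n - 1) / r * deriv (fun s => f s ^ m) r = 0)
    (hw : r * deriv f r + γ * f r = 0) :
    0 < deriv (deriv fun y => y ^ γ * f y) r := by
  rw [deriv_deriv_rpow_mul γ hr.ne' hf hf' hw]
  rw [deriv_deriv_rpow_comp m hf hf' hfr,
    (hf.self_of_nhds.hasDerivAt.rpow_const (Or.inl hfr.ne')).deriv,
    show m - 1 = m - 2 + 1 by ring, Real.rpow_add_one hfr.ne'] at hlap
  have hP : 0 < m * f r ^ (m - 2) := mul_pos hm (Real.rpow_pos_of_pos hfr _)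
  have hlap' : (m - 1) * (r * deriv f r) ^ 2 + r ^ 2 * (f r * deriv (deriv f) r)
      + (n - 1) * f r * (r * deriv f r) = 0 := by
    field_simp at hlap
    rw [mul_zero] at hlap
    linear_combination r * (mul_eq_zero.mp hlap).resolve_left hP.ne'
  have hkey : f r * r * (r * deriv (deriv f) r + (1 + γ) * deriv f r)
      = γ * f r ^ 2 * (n - 2 - m * γ) := by
    linear_combination hlap' + ((1 - m) * (r * deriv f r) + (2 - n + m * γ) * f r) * hw
  have hnmγ : 0 < n - 2 - m * γ := by linarith
  have hprod : 0 < f r * r * (r * deriv (deriv f) r + (1 + γ) * deriv f r) := by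
    rw [hkey]; positivity
  exact mul_pos (Real.rpow_pos_of_pos hr _) (pos_of_mul_pos_right hprod (by positivity))

theorem stmt_13_general (n : ℕ) (m α β η : ℝ)
    (hm0 : 0 < m)
    (hα : α < 0) (hβ : β < 0)
    (hr2 : α / β < ((n : ℝ) - 2) / m)
    (f : ℝ → ℝ)
    (hf2 : ContDiffOn ℝ 2 f (Ioi 0))
    (hfpos : ∀ r ∈ Ioi (0 : ℝ), 0 < f r)
    (hode : ∀ r ∈ Ioi (0 : ℝ),
      deriv (deriv (fun s => f s ^ m)) r + (((n : ℝ) - 1) / r) * deriv (fun s => f s ^ m) r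
        + α * f r + β * r * deriv f r = 0)
    (hlim : Tendsto (fun r => r ^ (((n : ℝ) - 2) / m) * f r) atTop (nhds η)) :
    ∀ r ∈ Ioi (0 : ℝ), 0 < α * f r + β * r * deriv f r := by
  set γ := α / β
  have hγ : 0 < γ := div_pos_of_neg_of_neg hα hβ
  have hαβ : α = β * γ := (mul_div_cancel₀ α hβ.ne).symm
  have hmγ : m * γ < n - 2 := by rwa [lt_div_iff₀ hm0, mul_comm] at hr2
  have hf : ∀ r ∈ Ioi (0 : ℝ), DifferentiableAt ℝ f r := fun r hr =>
    (hf2.contDiffAt (Ioi_mem_nhds hr)).differentiableAt (by norm_num)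
  have hf' : ∀ r ∈ Ioi (0 : ℝ), DifferentiableAt ℝ (deriv f) r := fun r hr =>
    ((hf2.deriv_of_isOpen isOpen_Ioi (m := 1) (by norm_num)).contDiffAt
      (Ioi_mem_nhds hr)).differentiableAt (by norm_num)
  have hg : ∀ r ∈ Ioi (0 : ℝ), HasDerivAt (fun s => s ^ γ * f s)
      (r ^ (γ - 1) * (r * deriv f r + γ * f r)) r :=
    fun r hr => hasDerivAt_rpow_mul (hf r hr).hasDerivAt (ne_of_gt hr) γ
  have hcrit : ∀ c ∈ Ioi (0 : ℝ), deriv (fun s => s ^ γ * f s) c = 0 →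
      0 < deriv (deriv fun s => s ^ γ * f s) c := by
    intro c hc hc'
    have hwc : c * deriv f c + γ * f c = 0 := by
      rw [(hg c hc).deriv] at hc'
      exact (mul_eq_zero.mp hc').resolve_left (Real.rpow_pos_of_pos hc _).ne'
    exact deriv_deriv_rpow_mul_pos_of_radial hc hm0 hγ hmγ
      (eventually_of_mem (Ioi_mem_nhds hc) hf) (hf' c hc) (hfpos c hc)
      (by linear_combination hode c hc - β * hwc - f c * hαβ) hwc
  have hdec := deriv_neg_of_tendsto_zero (fun r hr => (hg r hr).differentiableAt)
    (fun r hr => mul_pos (Real.rpow_pos_of_pos hr γ) (hfpos r hr))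
    (tendsto_rpow_mul_zero_of_tendsto hlim hr2) hcrit
  intro r hr
  have hw : r * deriv f r + γ * f r < 0 := by
    have := hdec r hr
    rw [(hg r hr).deriv] at this
    exact neg_of_mul_neg_right this (Real.rpow_pos_of_pos hr _).le
  calc 0 < β * (r * deriv f r + γ * f r) := mul_pos_of_neg_of_neg hβ hw
    _ = α * f r + β * r * deriv f r := by rw [hαβ]; ring

theorem stmt_13 (n : ℕ) (hn : 3 ≤ n) (m α β η : ℝ)
    (hm0 : 0 < m) (hm1 : m < ((n : ℝ) - 2) / n)
    (hα : α < 0) (hβ : β < 0)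
    (hr1 : 2 / (1 - m) < α / β) (hr2 : α / β < ((n : ℝ) - 2) / m)
    (hη : 0 < η)
    (f : ℝ → ℝ)
    (hf2 : ContDiffOn ℝ 2 f (Ioi 0))
    (hfpos : ∀ r ∈ Ioi (0 : ℝ), 0 < f r)
    (hode : ∀ r ∈ Ioi (0 : ℝ),
      deriv (deriv (fun s => f s ^ m)) r + (((n : ℝ) - 1) / r) * deriv (fun s => f s ^ m) r
        + α * f r + β * r * deriv f r = 0)
    (hlim : Tendsto (fun r => r ^ (((n : ℝ) - 2) / m) * f r) atTop (nhds η)) :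
    ∀ r ∈ Ioi (0 : ℝ), 0 < α * f r + β * r * deriv f r :=
  stmt_13_general n m α β η hm0 hα hβ hr2 f hf2 hfpos hode hlim
end
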